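/- arXiv:1401.7811 — 6 statements merged into one kernel-verified Lean document; each statement's English description precedes it below -/
import Mathlib

section
/- Let E be a real Hilbert space, L : E → E a self-adjoint bounded linear isomorphism, and let φ_t denote the flow x·t generated by an equation whose time-T map has the form x·T = e^{TL}x + K(x,T) with K(·,T) compact (mapping bounded sets into precompact sets). Let N ⊂ E be a closed bounded set with N ⊂ B(0,s). If (x_n) is a sequence in N with x_n·t ∈ N for all t ∈ (−n, n), then (x_n) has a convergent subsequence. -/
/-!
Let `P`, `Q` be the projections of `E = E⁺ ⊕ E⁻`; they are continuous since both summands are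
closed, and they commute with every `e^{tL}`. If `xₙ · t ∈ N` for `|t| ≤ T`, then
`xₙ = e^{TL} y + K(y,T)` with `y = xₙ · (-T)` and `xₙ = e^{-TL} z + K(z,-T)` with `z = xₙ · T`.
As `e^{TL}` expands `E⁺` and `e^{-TL}` expands `E⁻` by the factor `c(T)`, the pieces
`Q e^{TL} y` and `P e^{-TL} z` have norm at most `s ‖Q‖ / c(T)` and `s ‖P‖ / c(T)`. Hence for
large `n` every `xₙ` lies within `O(s / c(T))` of the totally bounded set
`P K(N,-T) + Q K(N,T)`, and letting `T → ∞` shows that `{xₙ}` is totally bounded.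
-/

open Set Filter Topology Metric RealInnerProductSpace
open scoped Pointwise

theorem totallyBounded_range_of_forall_eventually_near {α : Type*} [PseudoMetricSpace α]
    {u : ℕ → α}
    (h : ∀ ε > 0, ∃ S : Set α, TotallyBounded S ∧ ∀ᶠ n in atTop, ∃ y ∈ S, dist (u n) y < ε) :
    TotallyBounded (range u) := by
  refine totallyBounded_iff.2 fun ε hε => ?_
  obtain ⟨S, hS, hnear⟩ := h (ε / 2) (half_pos hε)
  obtain ⟨t, ht, hSt⟩ := totallyBounded_iff.1 hS (ε / 2) (half_pos hε)
  obtain ⟨m, hm⟩ := eventually_atTop.1 hnear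
  refine ⟨t ∪ u '' Iio m, ht.union ((finite_Iio m).image u), ?_⟩
  rintro _ ⟨n, rfl⟩
  simp only [mem_iUnion, mem_ball, exists_prop]
  rcases lt_or_ge n m with hn | hn
  · exact ⟨u n, Or.inr (mem_image_of_mem u hn), by simpa using hε⟩
  · obtain ⟨y, hyS, hy⟩ := hm n hn
    obtain ⟨z, hzt, hz⟩ := mem_iUnion₂.1 (hSt hyS)
    exact ⟨z, Or.inl hzt, by linarith [dist_triangle (u n) y z, mem_ball.1 hz]⟩

theorem TotallyBounded.add {E : Type*} [NormedAddCommGroup E] [CompleteSpace E] {s t : Set E}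
    (hs : TotallyBounded s) (ht : TotallyBounded t) : TotallyBounded (s + t) :=
  ((hs.closure.isCompact_of_isClosed isClosed_closure).add
    (ht.closure.isCompact_of_isClosed isClosed_closure)).totallyBounded.subset
    (add_subset_add subset_closure subset_closure)

theorem Submodule.IsOrtho.eq_orthogonal_of_isCompl {𝕜 E : Type*} [RCLike 𝕜]
    [NormedAddCommGroup E] [InnerProductSpace 𝕜 E] {p q : Submodule 𝕜 E}
    (hpq : p ⟂ q) (h : IsCompl p q) : q = pᗮ :=
  eq_of_le_of_inf_le_of_sup_le (z := p) hpq.symm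
    (by rw [p.orthogonal_disjoint.symm.eq_bot]; exact bot_le)
    (by rw [h.symm.sup_eq_top]; exact le_top)

theorem Submodule.IsOrtho.isTopCompl {𝕜 E : Type*} [RCLike 𝕜]
    [NormedAddCommGroup E] [InnerProductSpace 𝕜 E] [CompleteSpace E] {p q : Submodule 𝕜 E}
    (hpq : p ⟂ q) (h : IsCompl p q) : p.IsTopCompl q := by
  refine Submodule.IsCompl.isTopCompl_of_isClosed h ?_ ?_
  · rw [hpq.symm.eq_orthogonal_of_isCompl h.symm]
    exact isClosed_orthogonal _
  · rw [hpq.eq_orthogonal_of_isCompl h]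
    exact isClosed_orthogonal _

theorem Submodule.IsTopCompl.commute_projectionL {R M : Type*} [Ring R] [TopologicalSpace M]
    [AddCommGroup M] [IsTopologicalAddGroup M] [Module R M] {p q : Submodule R M}
    (h : p.IsTopCompl q) {T : M →L[R] M} (hp : ∀ v ∈ p, T v ∈ p) (hq : ∀ v ∈ q, T v ∈ q) :
    Commute (p.projectionL q h) T := by
  ext v
  set P := p.projectionL q h
  have hQv : v - P v ∈ q := by
    rw [← projectionL_eq_self_sub_projectionL h v]; exact projectionL_apply_mem h.symm v
  calc P (T v) = P (T (P v) + T (v - P v)) := by rw [← map_add, add_sub_cancel]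
    _ = T (P v) := by
      rw [map_add, (projectionL_eq_self_iff h _).2 (hp _ (projectionL_apply_mem h v)),
        (projectionL_apply_eq_zero_iff h).2 (hq _ hQv), add_zero]

theorem exp_neg_mul_exp {𝔸 : Type*} [NormedRing 𝔸] [NormedAlgebra ℝ 𝔸] [CompleteSpace 𝔸]
    (x : 𝔸) : NormedSpace.exp (-x) * NormedSpace.exp x = 1 := by
  -- `exp_add_of_commute` is stated for normed `ℚ`-algebras
  let := NormedAlgebra.restrictScalars ℚ ℝ 𝔸
  rw [← NormedSpace.exp_add_of_commute (Commute.refl x).neg_left, neg_add_cancel,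
    NormedSpace.exp_zero]

theorem exp_neg_apply_exp_apply {E : Type*} [NormedAddCommGroup E] [NormedSpace ℝ E]
    [CompleteSpace E] (A : E →L[ℝ] E) (v : E) :
    NormedSpace.exp (-A) (NormedSpace.exp A v) = v :=
  DFunLike.congr_fun (exp_neg_mul_exp A) v

section Splitting

variable {E : Type*} [NormedAddCommGroup E] [NormedSpace ℝ E]
  {p q : Submodule ℝ E} (hpq : p.IsTopCompl q) {L : E →L[ℝ] E}

theorem Submodule.IsTopCompl.projectionL_exp_smul_apply (hLp : ∀ v ∈ p, L v ∈ p)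
    (hLq : ∀ v ∈ q, L v ∈ q) (t : ℝ) (v : E) :
    p.projectionL q hpq (NormedSpace.exp (t • L) v) =
      NormedSpace.exp (t • L) (p.projectionL q hpq v) :=
  DFunLike.congr_fun ((hpq.commute_projectionL hLp hLq).smul_right t).exp_right.eq v

theorem Submodule.IsTopCompl.mul_dist_projectionL_add_projectionL_le [CompleteSpace E]
    (hLp : ∀ v ∈ p, L v ∈ p) (hLq : ∀ v ∈ q, L v ∈ q) {c T : ℝ} (hc : 0 ≤ c)
    (hp : ∀ v ∈ p, c * ‖v‖ ≤ ‖NormedSpace.exp (T • L) v‖)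
    (hq : ∀ v ∈ q, c * ‖v‖ ≤ ‖NormedSpace.exp ((-T) • L) v‖)
    {x y z k k' : E} (hy : x = NormedSpace.exp (T • L) y + k)
    (hz : x = NormedSpace.exp ((-T) • L) z + k') :
    c * dist x (p.projectionL q hpq k' + q.projectionL p hpq.symm k) ≤
      ‖p.projectionL q hpq z‖ + ‖q.projectionL p hpq.symm y‖ := by
  set P := p.projectionL q hpq
  set Q := q.projectionL p hpq.symm
  have hPx : P x = NormedSpace.exp ((-T) • L) (P z) + P k' := by
    rw [hz, map_add, hpq.projectionL_exp_smul_apply hLp hLq]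
  have hQx : Q x = NormedSpace.exp (T • L) (Q y) + Q k := by
    rw [hy, map_add, hpq.symm.projectionL_exp_smul_apply hLq hLp]
  have hPz : c * ‖NormedSpace.exp ((-T) • L) (P z)‖ ≤ ‖P z‖ := by
    have h := hp (NormedSpace.exp ((-T) • L) (P z)) (by
      rw [← hpq.projectionL_exp_smul_apply hLp hLq]; exact projectionL_apply_mem hpq _)
    rwa [← neg_neg T, neg_smul (-T), neg_neg, exp_neg_apply_exp_apply] at h
  have hQy : c * ‖NormedSpace.exp (T • L) (Q y)‖ ≤ ‖Q y‖ := by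
    have h := hq (NormedSpace.exp (T • L) (Q y)) (by
      rw [← hpq.symm.projectionL_exp_smul_apply hLq hLp]; exact projectionL_apply_mem hpq.symm _)
    rwa [neg_smul, exp_neg_apply_exp_apply] at h
  have hsub : x - (P k' + Q k) =
      NormedSpace.exp ((-T) • L) (P z) + NormedSpace.exp (T • L) (Q y) := by
    conv_lhs => rw [← projectionL_add_projectionL_eq_self hpq x, hPx, hQx]
    abel
  calc c * dist x (P k' + Q k)
      = c * ‖NormedSpace.exp ((-T) • L) (P z) + NormedSpace.exp (T • L) (Q y)‖ := by
        rw [dist_eq_norm, hsub]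
    _ ≤ c * ‖NormedSpace.exp ((-T) • L) (P z)‖ + c * ‖NormedSpace.exp (T • L) (Q y)‖ := by
        rw [← mul_add]; exact mul_le_mul_of_nonneg_left (norm_add_le _ _) hc
    _ ≤ ‖P z‖ + ‖Q y‖ := add_le_add hPz hQy

end Splitting

theorem stmt_0_general {E : Type*} [NormedAddCommGroup E] [InnerProductSpace ℝ E] [CompleteSpace E]
    (L : E ≃L[ℝ] E)
    -- the flow and the decomposition of its time-t maps: x · t = e^{tL} x + K(x,t)
    (φ : E → ℝ → E) (K : E → ℝ → E)
    (hφ0 : ∀ x, φ x 0 = x)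
    (hφadd : ∀ x s t, φ (φ x s) t = φ x (s + t))
    (hφ : ∀ (x : E) (t : ℝ),
      φ x t = NormedSpace.exp (t • (L : E →L[ℝ] E)) x + K x t)
    (hK : ∀ (t : ℝ) (B : Set E), Bornology.IsBounded B →
      TotallyBounded ((fun x => K x t) '' B))
    -- the orthogonal spectral splitting of L
    (Epos Eneg : Submodule ℝ E) (hcompl : IsCompl Epos Eneg)
    (horth : ∀ v ∈ Epos, ∀ w ∈ Eneg, ⟪v, w⟫ = 0)
    (hLpos : ∀ v ∈ Epos, L v ∈ Epos) (hLneg : ∀ v ∈ Eneg, L v ∈ Eneg)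
    -- expansion estimates with c(T) → ∞
    (c : ℝ → ℝ) (hc : Tendsto c atTop atTop)
    (hexp : ∀ T > (0:ℝ), ∀ v ∈ Epos,
      c T * ‖v‖ ≤ ‖NormedSpace.exp (T • (L : E →L[ℝ] E)) v‖)
    (hexpneg : ∀ T > (0:ℝ), ∀ v ∈ Eneg,
      c T * ‖v‖ ≤ ‖NormedSpace.exp ((-T) • (L : E →L[ℝ] E)) v‖)
    -- the closed bounded set N ⊆ B(0,s) and the sequence
    (s : ℝ) (N : Set E) (hNb : N ⊆ ball 0 s)
    (x : ℕ → E)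
    (hx : ∀ (n : ℕ), ∀ t ∈ Ioo (-(n:ℝ)) (n:ℝ), φ (x n) t ∈ N) :
    ∃ (g : ℕ → ℕ) (y : E), StrictMono g ∧ Tendsto (x ∘ g) atTop (𝓝 y) := by
  have hpq : Epos.IsTopCompl Eneg := (Submodule.isOrtho_iff_inner_eq.2 horth).isTopCompl hcompl
  set P := Epos.projectionL Eneg hpq
  set Q := Eneg.projectionL Epos hpq.symm
  have hN : Bornology.IsBounded N := isBounded_ball.subset hNb
  suffices hrange : TotallyBounded (range x) by
    obtain ⟨y, -, g, hg, hy⟩ :=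
      (hrange.closure.isCompact_of_isClosed isClosed_closure).tendsto_subseq
        fun n => subset_closure (mem_range_self n)
    exact ⟨g, y, hg, hy⟩
  refine totallyBounded_range_of_forall_eventually_near fun ε hε => ?_
  set M := (‖P‖ + ‖Q‖) * s
  obtain ⟨T, hT, hcT⟩ :=
    ((eventually_gt_atTop 0).and (hc.eventually_gt_atTop (max (M / ε) 0))).exists
  refine ⟨P '' ((K · (-T)) '' N) + Q '' ((K · T) '' N),
    ((hK _ _ hN).image P.uniformContinuous).add ((hK _ _ hN).image Q.uniformContinuous), ?_⟩
  filter_upwards [tendsto_natCast_atTop_atTop.eventually_gt_atTop T] with n hn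
  set y := φ (x n) (-T)
  set z := φ (x n) T
  have hyN : y ∈ N := hx n (-T) ⟨by linarith, by linarith⟩
  have hzN : z ∈ N := hx n T ⟨by linarith, hn⟩
  have hxy : x n = NormedSpace.exp (T • (L : E →L[ℝ] E)) y + K y T := by
    rw [← hφ, hφadd, neg_add_cancel, hφ0]
  have hxz : x n = NormedSpace.exp ((-T) • (L : E →L[ℝ] E)) z + K z (-T) := by
    rw [← hφ, hφadd, add_neg_cancel, hφ0]
  refine ⟨_, add_mem_add (mem_image_of_mem P (mem_image_of_mem _ hzN))
    (mem_image_of_mem Q (mem_image_of_mem _ hyN)), ?_⟩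
  have hcT0 : 0 < c T := (le_max_right _ _).trans_lt hcT
  have hnear := hpq.mul_dist_projectionL_add_projectionL_le hLpos hLneg hcT0.le
    (hexp T hT) (hexpneg T hT) hxy hxz
  have hM : ‖P z‖ + ‖Q y‖ ≤ M := by
    have hz := (mem_ball_zero_iff.1 (hNb hzN)).le
    have hy := (mem_ball_zero_iff.1 (hNb hyN)).le
    calc ‖P z‖ + ‖Q y‖ ≤ ‖P‖ * ‖z‖ + ‖Q‖ * ‖y‖ := add_le_add (P.le_opNorm z) (Q.le_opNorm y)
      _ ≤ ‖P‖ * s + ‖Q‖ * s := by gcongr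
      _ = M := (add_mul _ _ _).symm
  have hMε : M < c T * ε := (div_lt_iff₀ hε).1 ((le_max_left _ _).trans_lt hcT)
  exact lt_of_mul_lt_mul_left (hnear.trans_lt (hM.trans_lt hMε)) hcT0.le

/-- In a real Hilbert space `E` with a self-adjoint bounded linear
isomorphism `L`, for a flow whose time-`t` map has the form
`x · t = e^{tL} x + K(x,t)` with `K(·,t)` mapping bounded sets to precompact sets,
and with the spectral splitting `E = E⁺ ⊕ E⁻` of `L` together with the expansion
estimates `‖e^{TL}v‖ ≥ c(T)‖v‖` on `E⁺` (and backwards on `E⁻`), `c(T) → ∞`: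
any sequence `(xₙ)` in a closed bounded set `N ⊆ B(0,s)` with `xₙ · t ∈ N` for
all `t ∈ (−n, n)` has a convergent subsequence. -/
theorem stmt_0 {E : Type*} [NormedAddCommGroup E] [InnerProductSpace ℝ E] [CompleteSpace E]
    (L : E ≃L[ℝ] E)
    (hLsa : ∀ x y : E, ⟪L x, y⟫ = ⟪x, L y⟫)
    -- the flow and the decomposition of its time-t maps: x · t = e^{tL} x + K(x,t)
    (φ : E → ℝ → E) (K : E → ℝ → E)
    (hφ0 : ∀ x, φ x 0 = x)
    (hφadd : ∀ x s t, φ (φ x s) t = φ x (s + t))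
    (hφ : ∀ (x : E) (t : ℝ),
      φ x t = NormedSpace.exp (t • (L : E →L[ℝ] E)) x + K x t)
    (hK : ∀ (t : ℝ) (B : Set E), Bornology.IsBounded B →
      TotallyBounded ((fun x => K x t) '' B))
    -- the orthogonal spectral splitting of L
    (Epos Eneg : Submodule ℝ E) (hcompl : IsCompl Epos Eneg)
    (horth : ∀ v ∈ Epos, ∀ w ∈ Eneg, ⟪v, w⟫ = 0)
    (hLpos : ∀ v ∈ Epos, L v ∈ Epos) (hLneg : ∀ v ∈ Eneg, L v ∈ Eneg)
    -- expansion estimates with c(T) → ∞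
    (c : ℝ → ℝ) (hc : Tendsto c atTop atTop)
    (hexp : ∀ T > (0:ℝ), ∀ v ∈ Epos,
      c T * ‖v‖ ≤ ‖NormedSpace.exp (T • (L : E →L[ℝ] E)) v‖)
    (hexpneg : ∀ T > (0:ℝ), ∀ v ∈ Eneg,
      c T * ‖v‖ ≤ ‖NormedSpace.exp ((-T) • (L : E →L[ℝ] E)) v‖)
    -- the closed bounded set N ⊆ B(0,s) and the sequence
    (s : ℝ) (N : Set E) (hNc : IsClosed N) (hNb : N ⊆ ball 0 s)
    (x : ℕ → E) (hxN : ∀ n, x n ∈ N)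
    (hx : ∀ (n : ℕ), ∀ t ∈ Ioo (-(n:ℝ)) (n:ℝ), φ (x n) t ∈ N) :
    ∃ (g : ℕ → ℕ) (y : E), StrictMono g ∧ Tendsto (x ∘ g) atTop (𝓝 y) :=
  stmt_0_general L φ K hφ0 hφadd hφ hK Epos Eneg hcompl horth hLpos hLneg c hc hexp hexpneg s N hNb
    x hx
end

section
/- With notation as above, let N̂ be a closed bounded subset of E such that no full backward orbit stays in N̂, i.e. there is no point x₀ ∈ N̂ with x₀·(−∞,0] ⊂ N̂. Then there exists T₁ > 0 such that for every x ∈ N̂ there is t ∈ [0, T₁] with x·(−t) ∉ N̂. -/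
/-!
If the exit time from `N̂` in backward time were not uniformly bounded, there would be points
`xₙ ∈ N̂` whose backward orbits stay in `N̂` for time `2(n+1)`. Recentring at the midpoints
`yₙ = xₙ·(-(n+1))` gives points whose orbits stay in `N̂` on `[-(n+1), n+1]`; by the compactness
property a subsequence converges to a point whose full orbit lies in `N̂`, in particular its
backward orbit, which is excluded.
-/

open Set Filter Topology

theorem flow_mem_of_backward_segment_mem {α : Type*} {φ : α → ℝ → α}
    (hφadd : ∀ x s t, φ (φ x s) t = φ x (s + t)) {S : Set α} {x : α} {T : ℝ}
    (hx : ∀ t ∈ Icc 0 (2 * T), φ x (-t) ∈ S) {t : ℝ} (ht : t ∈ Icc (-T) T) :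
    φ (φ x (-T)) t ∈ S := by
  rw [hφadd]
  convert hx (T - t) ⟨by linarith [ht.2], by linarith [ht.1]⟩ using 2
  ring

theorem stmt_1_general {E : Type*} [NormedAddCommGroup E]
    (φ : E → ℝ → E)
    (hφadd : ∀ x s t, φ (φ x s) t = φ x (s + t))
    (Nhat : Set E)
    -- compactness property of the flow (consequence of the form e^{tL} + compact):
    (hcpt : ∀ x : ℕ → E, (∀ n, x n ∈ Nhat) →
      (∀ n : ℕ, ∀ t ∈ Ioo (-(n:ℝ)) (n:ℝ), φ (x n) t ∈ Nhat) →
      ∃ (g : ℕ → ℕ) (y : E), StrictMono g ∧ Tendsto (x ∘ g) atTop (𝓝 y) ∧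
        y ∈ Nhat ∧ ∀ t : ℝ, φ y t ∈ Nhat)
    -- no full backward orbit stays in N̂:
    (hnoback : ¬ ∃ x₀ ∈ Nhat, ∀ t ≤ (0:ℝ), φ x₀ t ∈ Nhat) :
    ∃ T₁ > (0:ℝ), ∀ x ∈ Nhat, ∃ t ∈ Icc (0:ℝ) T₁, φ x (-t) ∉ Nhat := by
  by_contra! hcon
  choose x _ hx using fun n : ℕ => hcon (2 * ((n : ℝ) + 1)) (by positivity)
  have hy_mem : ∀ n : ℕ, φ (x n) (-((n : ℝ) + 1)) ∈ Nhat := fun n =>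
    hx n _ ⟨by positivity, by linarith [(n.cast_nonneg : (0 : ℝ) ≤ n)]⟩
  have hy_orbit : ∀ n : ℕ, ∀ t ∈ Ioo (-(n : ℝ)) n, φ (φ (x n) (-((n : ℝ) + 1))) t ∈ Nhat :=
    fun n t ht => flow_mem_of_backward_segment_mem hφadd (hx n)
      ⟨by linarith [ht.1], by linarith [ht.2]⟩
  obtain ⟨-, z, -, -, hz, hz_orbit⟩ := hcpt _ hy_mem hy_orbit
  exact hnoback ⟨z, hz, fun t _ => hz_orbit t⟩

/-- For the flow `φ` (of the form `e^{tL} + compact`, encoded by the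
compactness property `hcpt` from the context), if `N̂` is closed and bounded and no
full backward orbit stays in `N̂`, then there is a uniform `T₁ > 0` such that every
point of `N̂` leaves `N̂` in backward time at most `T₁`. -/
theorem stmt_1 {E : Type*} [NormedAddCommGroup E] [InnerProductSpace ℝ E] [CompleteSpace E]
    (φ : E → ℝ → E)
    (hφ0 : ∀ x, φ x 0 = x)
    (hφadd : ∀ x s t, φ (φ x s) t = φ x (s + t))
    (hφcont : Continuous fun p : E × ℝ => φ p.1 p.2)
    (Nhat : Set E) (hNc : IsClosed Nhat) (hNb : Bornology.IsBounded Nhat)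
    -- compactness property of the flow (consequence of the form e^{tL} + compact):
    (hcpt : ∀ x : ℕ → E, (∀ n, x n ∈ Nhat) →
      (∀ n : ℕ, ∀ t ∈ Ioo (-(n:ℝ)) (n:ℝ), φ (x n) t ∈ Nhat) →
      ∃ (g : ℕ → ℕ) (y : E), StrictMono g ∧ Tendsto (x ∘ g) atTop (𝓝 y) ∧
        y ∈ Nhat ∧ ∀ t : ℝ, φ y t ∈ Nhat)
    -- no full backward orbit stays in N̂:
    (hnoback : ¬ ∃ x₀ ∈ Nhat, ∀ t ≤ (0:ℝ), φ x₀ t ∈ Nhat) :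
    ∃ T₁ > (0:ℝ), ∀ x ∈ Nhat, ∃ t ∈ Icc (0:ℝ) T₁, φ x (-t) ∉ Nhat :=
  stmt_1_general φ hφadd Nhat hcpt hnoback
end

section
/- Let U be a closed bounded isolating neighborhood for the flow, i.e. Inv(U) ⊂ int U, where the flow has the compactness property that any sequence (x_n) ⊂ U with x_n·(−n,n) ⊂ U has a subsequence converging to a point of Inv(U). Define G^T(U) = ⋂_{|t| ≤ T} U·(−t,t) (equivalently, the set of x with x·[−T,T] ⊂ U). Then there exists T > 0 such that G^T(U) ⊂ int U. -/
open Set Filter Topology Metric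

/-! Otherwise there are points `xₙ ∉ int U` with `xₙ·[-(n+1), n+1] ⊆ U`. By the compactness
property a subsequence converges to a point of `Inv(U) ⊆ int U`, which is impossible since the
complement of `int U` is closed. -/

theorem stmt_2_general {E : Type*} [NormedAddCommGroup E]
    (φ : E → ℝ → E)
    (hφ0 : ∀ x, φ x 0 = x)
    (U : Set E)
    -- U is an isolating neighborhood: Inv(U) ⊆ int U
    (hiso : {x ∈ U | ∀ t : ℝ, φ x t ∈ U} ⊆ interior U)
    -- compactness property: subsequences converge to points of Inv(U)
    (hcpt : ∀ x : ℕ → E, (∀ n, x n ∈ U) →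
      (∀ n : ℕ, ∀ t ∈ Ioo (-(n:ℝ)) (n:ℝ), φ (x n) t ∈ U) →
      ∃ (g : ℕ → ℕ) (y : E), StrictMono g ∧ Tendsto (x ∘ g) atTop (𝓝 y) ∧
        y ∈ U ∧ ∀ t : ℝ, φ y t ∈ U) :
    ∃ T > (0:ℝ), {x : E | ∀ t ∈ Icc (-T) T, φ x t ∈ U} ⊆ interior U := by
  by_contra! h
  choose x hx_orbit hx_bdry using fun n : ℕ => not_subset.1 (h (n + 1) (by positivity))
  have hx_mem (n : ℕ) : x n ∈ U := hφ0 (x n) ▸ hx_orbit n 0 ⟨by linarith, by linarith⟩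
  obtain ⟨g, y, -, hlim, hyU, hy_orbit⟩ := hcpt x hx_mem fun n t ht ↦
    hx_orbit n t ⟨by linarith [ht.1], by linarith [ht.2]⟩
  exact isOpen_interior.isClosed_compl.mem_of_tendsto hlim
    (.of_forall fun n ↦ hx_bdry (g n)) (hiso ⟨hyU, hy_orbit⟩)

/-- If `U` is a closed bounded isolating neighborhood (`Inv(U) ⊆ int U`)
for a flow with the stated compactness property, then there exists `T > 0` with
`G^T(U) = {x : x·[−T,T] ⊆ U} ⊆ int U`. -/
theorem stmt_2 {E : Type*} [NormedAddCommGroup E] [InnerProductSpace ℝ E] [CompleteSpace E]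
    (φ : E → ℝ → E)
    (hφ0 : ∀ x, φ x 0 = x)
    (hφadd : ∀ x s t, φ (φ x s) t = φ x (s + t))
    (hφcont : Continuous fun p : E × ℝ => φ p.1 p.2)
    (U : Set E) (hUc : IsClosed U) (hUb : Bornology.IsBounded U)
    -- U is an isolating neighborhood: Inv(U) ⊆ int U
    (hiso : {x ∈ U | ∀ t : ℝ, φ x t ∈ U} ⊆ interior U)
    -- compactness property: subsequences converge to points of Inv(U)
    (hcpt : ∀ x : ℕ → E, (∀ n, x n ∈ U) →
      (∀ n : ℕ, ∀ t ∈ Ioo (-(n:ℝ)) (n:ℝ), φ (x n) t ∈ U) →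
      ∃ (g : ℕ → ℕ) (y : E), StrictMono g ∧ Tendsto (x ∘ g) atTop (𝓝 y) ∧
        y ∈ U ∧ ∀ t : ℝ, φ y t ∈ U) :
    ∃ T > (0:ℝ), {x : E | ∀ t ∈ Icc (-T) T, φ x t ∈ U} ⊆ interior U :=
  stmt_2_general φ hφ0 U hiso hcpt
end

section
/- Let M be a compact C¹ submanifold of a real Hilbert space E. Then there exists a finite-dimensional linear subspace T ⊂ E such that the orthogonal projection P_T : E → T restricts to an injective immersion (hence a diffeomorphism onto its image) on M. -/
open Set Filter Topology NNReal RealInnerProductSpace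
open scoped Manifold

/-!
Near each point `z`, `f` is a `C¹` perturbation of its injective derivative, so any contraction
`Q` fixing the tangent space at `z` satisfies `‖f a - f b‖ ≤ 3 ‖Q (f a - f b)‖` for `a, b` close
to `z`. Finitely many such neighbourhoods `U` cover `M`, and the pairs `(a, b)` lying in no
`U × U` form a compact set on which `f a - f b ≠ 0`, so finitely many vectors already detect all
these differences. The orthogonal projection onto the span of these vectors and of the finitely
many tangent spaces is then injective on `f '' M`, and differentiating the local bound along lines
in a chart shows that it is injective on tangent vectors.
-/

section

variable {F : Type*} [NormedAddCommGroup F] [NormedSpace ℝ F]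
  {E : Type*} [NormedAddCommGroup E] [NormedSpace ℝ E]

theorem ApproximatesLinearOn.norm_sub_le_three_mul_norm_map {g : F → E} {A : F →L[ℝ] E}
    {s : Set F} {ε : ℝ≥0} (hg : ApproximatesLinearOn g A s ε) (hA : ∀ v, 2 * ε * ‖v‖ ≤ ‖A v‖)
    {Q : E →L[ℝ] E} (hQ : ∀ y, ‖Q y‖ ≤ ‖y‖) (hQA : ∀ v, Q (A v) = A v)
    {α β : F} (hα : α ∈ s) (hβ : β ∈ s) :
    ‖g α - g β‖ ≤ 3 * ‖Q (g α - g β)‖ := by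
  set e := g α - g β - A (α - β)
  have he : ‖e‖ ≤ ε * ‖α - β‖ := hg α hα β hβ
  have hAd := hA (α - β)
  have hQe : ‖A (α - β)‖ ≤ ‖Q (g α - g β)‖ + ‖e‖ := calc
    ‖A (α - β)‖ = ‖Q (g α - g β) - Q e‖ := by rw [← map_sub, sub_sub_cancel, hQA]
    _ ≤ ‖Q (g α - g β)‖ + ‖Q e‖ := norm_sub_le _ _
    _ ≤ ‖Q (g α - g β)‖ + ‖e‖ := by gcongr; exact hQ e
  have hΔ : ‖g α - g β‖ ≤ ‖A (α - β)‖ + ‖e‖ := by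
    simpa [e] using norm_add_le (A (α - β)) e
  linarith

theorem HasStrictFDerivAt.exists_mem_nhds_norm_sub_le [FiniteDimensional ℝ F] {g : F → E}
    {A : F →L[ℝ] E} {p : F} (hg : HasStrictFDerivAt g A p) (hA : Function.Injective A) :
    ∃ s ∈ 𝓝 p, ∀ Q : E →L[ℝ] E, (∀ y, ‖Q y‖ ≤ ‖y‖) → (∀ v, Q (A v) = A v) →
      ∀ α ∈ s, ∀ β ∈ s, ‖g α - g β‖ ≤ 3 * ‖Q (g α - g β)‖ := by
  obtain ⟨K, -, hK⟩ := (A : F →ₗ[ℝ] E).exists_antilipschitzWith (LinearMap.ker_eq_bot.2 hA)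
  obtain ⟨c, hc, hcA⟩ := antilipschitzWith_iff_exists_mul_le_norm.1 ⟨K, hK⟩
  have hε : ((c / 2).toNNReal : ℝ) = c / 2 := Real.coe_toNNReal _ (by positivity)
  obtain ⟨s, hs, hgs⟩ := hg.approximates_deriv_on_nhds (c := (c / 2).toNNReal)
    (Or.inr (by simpa using hc))
  refine ⟨s, hs, fun Q hQ hQA α hα β hβ ↦
    hgs.norm_sub_le_three_mul_norm_map (fun v ↦ ?_) hQ hQA hα hβ⟩
  rw [hε]
  linarith [show c * ‖v‖ ≤ ‖A v‖ from hcA v]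

theorem HasFDerivAt.norm_le_mul_norm_map_of_eventually {g : F → E} {A : F →L[ℝ] E} {p : F}
    (hg : HasFDerivAt g A p) {Q : E →L[ℝ] E} {L : ℝ}
    (h : ∀ᶠ α in 𝓝 p, ‖g α - g p‖ ≤ L * ‖Q (g α - g p)‖) (v : F) :
    ‖A v‖ ≤ L * ‖Q (A v)‖ := by
  have hline : HasDerivAt (fun t : ℝ ↦ g (p + t • v)) (A v) 0 := by
    have hp : HasFDerivAt g A (p + (0 : ℝ) • v) := by simpa using hg
    simpa [Function.comp_def] using
      hp.comp_hasDerivAt (0 : ℝ) (((hasDerivAt_id' 0).smul_const v).const_add p)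
  have hslope := hline.tendsto_slope_zero_right
  simp only [zero_add, zero_smul, add_zero] at hslope
  have hline_tendsto : Tendsto (fun t : ℝ ↦ p + t • v) (𝓝[>] 0) (𝓝 p) :=
    tendsto_nhdsWithin_of_tendsto_nhds (Continuous.tendsto' (by fun_prop) 0 p (by simp))
  refine le_of_tendsto_of_tendsto hslope.norm
    (((Q.continuous.tendsto _).comp hslope).norm.const_mul L) ?_
  filter_upwards [hline_tendsto h, self_mem_nhdsWithin] with t ht (htpos : 0 < t)
  simp only [Function.comp_apply, map_smul, norm_smul, Real.norm_of_nonneg (inv_nonneg.2 htpos.le)]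
  rw [mul_left_comm]
  exact mul_le_mul_of_nonneg_left ht (inv_nonneg.2 htpos.le)

theorem HasFDerivAt.injective_map_of_eventually {g : F → E} {A : F →L[ℝ] E} {p : F}
    (hg : HasFDerivAt g A p) (hA : Function.Injective A) {Q : E →L[ℝ] E} {L : ℝ}
    (h : ∀ᶠ α in 𝓝 p, ‖g α - g p‖ ≤ L * ‖Q (g α - g p)‖) :
    Function.Injective fun v ↦ Q (A v) := by
  refine (injective_iff_map_eq_zero (Q.comp A)).2 fun v hv ↦ hA ?_
  have hle := hg.norm_le_mul_norm_map_of_eventually h v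
  rw [← ContinuousLinearMap.comp_apply, hv, norm_zero, mul_zero, norm_le_zero_iff] at hle
  rw [hle, map_zero]

section Manifold

variable {M : Type*} [TopologicalSpace M] [ChartedSpace F M] {f : M → E}

theorem ContMDiffAt.hasStrictFDerivAt_comp_extChartAt_symm {z : M}
    (hf : ContMDiffAt 𝓘(ℝ, F) 𝓘(ℝ, E) 1 f z) :
    HasStrictFDerivAt (f ∘ (extChartAt 𝓘(ℝ, F) z).symm) (mfderiv 𝓘(ℝ, F) 𝓘(ℝ, E) f z)
      (extChartAt 𝓘(ℝ, F) z z) := by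
  have hg : ContDiffAt ℝ 1 (f ∘ (extChartAt 𝓘(ℝ, F) z).symm) (extChartAt 𝓘(ℝ, F) z z) := by
    rw [contMDiffAt_iff_source, modelWithCornersSelf_coe, range_id, contMDiffWithinAt_univ,
      contMDiffAt_iff_contDiffAt] at hf
    exact hf
  have hA : mfderiv 𝓘(ℝ, F) 𝓘(ℝ, E) f z =
      fderiv ℝ (f ∘ (extChartAt 𝓘(ℝ, F) z).symm) (extChartAt 𝓘(ℝ, F) z z) := by
    rw [(hf.mdifferentiableAt one_ne_zero).mfderiv, modelWithCornersSelf_coe, range_id,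
      fderivWithin_univ, writtenInExtChartAt, extChartAt_model_space_eq_id, PartialEquiv.refl_coe,
      Function.id_comp]
  rw [hA]
  exact hg.hasStrictFDerivAt one_ne_zero

theorem ContMDiffAt.exists_isOpen_norm_sub_le [FiniteDimensional ℝ F] {z : M}
    (hf : ContMDiffAt 𝓘(ℝ, F) 𝓘(ℝ, E) 1 f z)
    (hinj : Function.Injective (mfderiv 𝓘(ℝ, F) 𝓘(ℝ, E) f z)) :
    ∃ U : Set M, IsOpen U ∧ z ∈ U ∧ ∃ R : Submodule ℝ E, FiniteDimensional ℝ R ∧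
      ∀ Q : E →L[ℝ] E, (∀ y, ‖Q y‖ ≤ ‖y‖) → (∀ y ∈ R, Q y = y) →
      ∀ a ∈ U, ∀ b ∈ U, ‖f a - f b‖ ≤ 3 * ‖Q (f a - f b)‖ := by
  set c := extChartAt 𝓘(ℝ, F) z
  set A : F →L[ℝ] E := mfderiv 𝓘(ℝ, F) 𝓘(ℝ, E) f z
  obtain ⟨s, hs, hest⟩ :=
    hf.hasStrictFDerivAt_comp_extChartAt_symm.exists_mem_nhds_norm_sub_le hinj
  have hfc : ∀ a ∈ c.source, f a = (f ∘ c.symm) (c a) := fun a ha ↦ by simp [c.left_inv ha]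
  refine ⟨c.source ∩ c ⁻¹' interior s, isOpen_extChartAt_preimage' z isOpen_interior,
    ⟨mem_extChartAt_source z, mem_interior_iff_mem_nhds.2 hs⟩, LinearMap.range (A : F →ₗ[ℝ] E),
    inferInstance, ?_⟩
  rintro Q hQ hQA a ⟨ha, has⟩ b ⟨hb, hbs⟩
  rw [hfc a ha, hfc b hb]
  exact hest Q hQ (fun v ↦ hQA _ (LinearMap.mem_range_self _ v)) _ (interior_subset has) _
    (interior_subset hbs)

theorem ContMDiffAt.injective_map_mfderiv_of_eventually {x : M}
    (hf : ContMDiffAt 𝓘(ℝ, F) 𝓘(ℝ, E) 1 f x)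
    (hinj : Function.Injective (mfderiv 𝓘(ℝ, F) 𝓘(ℝ, E) f x)) {Q : E →L[ℝ] E} {L : ℝ}
    (h : ∀ᶠ a in 𝓝 x, ‖f a - f x‖ ≤ L * ‖Q (f a - f x)‖) :
    Function.Injective fun v : F ↦ Q (mfderiv 𝓘(ℝ, F) 𝓘(ℝ, E) f x v) := by
  have hchart : ∀ᶠ α in 𝓝 (extChartAt 𝓘(ℝ, F) x x),
      ‖f ((extChartAt 𝓘(ℝ, F) x).symm α) - f x‖ ≤
        L * ‖Q (f ((extChartAt 𝓘(ℝ, F) x).symm α) - f x)‖ := by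
    have hsymm := (continuousAt_extChartAt_symm (I := 𝓘(ℝ, F)) x).tendsto
    rw [extChartAt_to_inv] at hsymm
    exact hsymm h
  exact hf.hasStrictFDerivAt_comp_extChartAt_symm.hasFDerivAt.injective_map_of_eventually hinj
    (by simpa [extChartAt_to_inv] using hchart)

end Manifold

end

theorem IsCompact.exists_finiteDimensional_forall_notMem_orthogonal {E : Type*}
    [NormedAddCommGroup E] [InnerProductSpace ℝ E] {X : Type*} [TopologicalSpace X] {K : Set X}
    (hK : IsCompact K) {d : X → E} (hd : Continuous d) (h0 : ∀ x ∈ K, d x ≠ 0) :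
    ∃ T : Submodule ℝ E, FiniteDimensional ℝ T ∧ ∀ x ∈ K, d x ∉ Tᗮ := by
  obtain ⟨t, -, ht⟩ := hK.elim_nhds_subcover (fun y ↦ {x | ⟪d y, d x⟫ ≠ 0}) fun y hy ↦
    (isOpen_ne_fun (continuous_const.inner hd) continuous_const).mem_nhds
      (inner_self_ne_zero.2 (h0 y hy))
  refine ⟨Submodule.span ℝ (d '' t), FiniteDimensional.span_of_finite ℝ (t.finite_toSet.image d),
    fun x hx hperp ↦ ?_⟩
  obtain ⟨y, hy, hxy⟩ := mem_iUnion₂.1 (ht hx)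
  exact hxy (Submodule.inner_right_of_mem_orthogonal
    (Submodule.subset_span (mem_image_of_mem d hy)) hperp)

theorem Continuous.exists_finiteDimensional_forall_sub_notMem_orthogonal {E : Type*}
    [NormedAddCommGroup E] [InnerProductSpace ℝ E] {M : Type*} [TopologicalSpace M]
    [CompactSpace M] {f : M → E} (hf : Continuous f) (hinj : Function.Injective f)
    {V : Set (M × M)} (hV : IsOpen V) (hdiag : ∀ x, (x, x) ∈ V) :
    ∃ T : Submodule ℝ E, FiniteDimensional ℝ T ∧ ∀ a b, (a, b) ∉ V → f a - f b ∉ Tᗮ := by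
  obtain ⟨T, hT, hTV⟩ :=
    hV.isClosed_compl.isCompact.exists_finiteDimensional_forall_notMem_orthogonal
      (d := fun p : M × M ↦ f p.1 - f p.2) (by fun_prop) fun ⟨a, b⟩ hab hfab ↦
        hab ((hinj (sub_eq_zero.1 hfab) : a = b) ▸ hdiag a)
  exact ⟨T, hT, fun a b hab ↦ hTV (a, b) hab⟩

theorem stmt_5_general {E : Type*} [NormedAddCommGroup E] [InnerProductSpace ℝ E]
    {F : Type*} [NormedAddCommGroup F] [NormedSpace ℝ F]
    {M : Type*} [TopologicalSpace M] [CompactSpace M] [ChartedSpace F M]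
    (f : M → E)
    (hf : ContMDiff (modelWithCornersSelf ℝ F) (modelWithCornersSelf ℝ E) 1 f)
    (hemb : Topology.IsEmbedding f)
    (himm : ∀ x : M, Function.Injective
      (mfderiv (modelWithCornersSelf ℝ F) (modelWithCornersSelf ℝ E) f x)) :
    ∃ (T : Submodule ℝ E) (P : E →L[ℝ] E),
      FiniteDimensional ℝ T ∧
      -- P is the orthogonal projection of E onto T
      (∀ v, P v ∈ T) ∧ (∀ v ∈ T, P v = v) ∧ (∀ v w : E, ⟪P v, w⟫ = ⟪v, P w⟫) ∧
      -- P restricted to M is injective ...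
      Function.Injective (fun m : M => P (f m)) ∧
      -- ... and an immersion
      ∀ x : M, Function.Injective (fun v : F => P
        (mfderiv (modelWithCornersSelf ℝ F) (modelWithCornersSelf ℝ E) f x v)) := by
  have : T2Space M := hemb.t2Space
  have hF (z : M) : FiniteDimensional ℝ F :=
    have : Nonempty M := ⟨z⟩
    .of_locallyCompact_manifold M 𝓘(ℝ, F)
  choose U hUo hzU R hR hUest using fun z ↦
    have := hF z
    (hf z).exists_isOpen_norm_sub_le (himm z)
  obtain ⟨s, hs⟩ := isCompact_univ.elim_finite_subcover U hUo fun z _ ↦ mem_iUnion.2 ⟨z, hzU z⟩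
  have hcover (x : M) : ∃ z ∈ s, x ∈ U z := by simpa using hs (mem_univ x)
  set V := ⋃ z ∈ s, U z ×ˢ U z
  obtain ⟨T₁, hT₁, hT₁V⟩ := hemb.continuous.exists_finiteDimensional_forall_sub_notMem_orthogonal
    hemb.injective (isOpen_biUnion fun z _ ↦ (hUo z).prod (hUo z)) fun x ↦
      let ⟨z, hz, hx⟩ := hcover x
      mem_biUnion hz ⟨hx, hx⟩
  set T := s.sup R ⊔ T₁
  have hloc : ∀ z ∈ s, ∀ a ∈ U z, ∀ b ∈ U z, ‖f a - f b‖ ≤ 3 * ‖T.starProjection (f a - f b)‖ :=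
    fun z hz ↦ hUest z _ T.norm_starProjection_apply_le fun y hy ↦
      T.starProjection_eq_self_iff.2 (le_sup_left (b := T₁) (Finset.le_sup (f := R) hz hy))
  refine ⟨T, T.starProjection, inferInstance, T.starProjection_apply_mem,
    fun v hv ↦ T.starProjection_eq_self_iff.2 hv, T.inner_starProjection_left_eq_right, ?_,
    fun x ↦ ?_⟩
  · intro a b hab
    have hperp : f a - f b ∈ Tᗮ :=
      T.starProjection_apply_eq_zero_iff.1 (by rw [map_sub, sub_eq_zero]; exact hab)
    by_cases hV : (a, b) ∈ V
    · obtain ⟨z, hz, ha, hb⟩ : ∃ z ∈ s, a ∈ U z ∧ b ∈ U z := by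
        simpa only [V, mem_iUnion₂, exists_prop, mem_prod] using hV
      have hle := hloc z hz a ha b hb
      rw [T.starProjection_apply_eq_zero_iff.2 hperp, norm_zero, mul_zero, norm_le_zero_iff,
        sub_eq_zero] at hle
      exact hemb.injective hle
    · exact absurd (Submodule.orthogonal_le le_sup_right hperp) (hT₁V a b hV)
  · obtain ⟨z, hz, hx⟩ := hcover x
    exact (hf x).injective_map_mfderiv_of_eventually (himm x)
      (eventually_of_mem ((hUo z).mem_nhds hx) fun a ha ↦ hloc z hz a ha x hx)

/-- Let `M` be a compact `C¹` submanifold of a real Hilbert space `E`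
(encoded as the image of a `C¹` embedding `f` of a compact `C¹` manifold `M` which is
an immersion). Then there is a finite-dimensional subspace `T ⊆ E` such that the
orthogonal projection `P` onto `T` restricts to an injective immersion on `M`. -/
theorem stmt_5 {E : Type*} [NormedAddCommGroup E] [InnerProductSpace ℝ E] [CompleteSpace E]
    {F : Type*} [NormedAddCommGroup F] [NormedSpace ℝ F]
    {M : Type*} [TopologicalSpace M] [CompactSpace M] [ChartedSpace F M]
    (f : M → E)
    (hf : ContMDiff (modelWithCornersSelf ℝ F) (modelWithCornersSelf ℝ E) 1 f)
    (hemb : Topology.IsEmbedding f)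
    (himm : ∀ x : M, Function.Injective
      (mfderiv (modelWithCornersSelf ℝ F) (modelWithCornersSelf ℝ E) f x)) :
    ∃ (T : Submodule ℝ E) (P : E →L[ℝ] E),
      FiniteDimensional ℝ T ∧
      -- P is the orthogonal projection of E onto T
      (∀ v, P v ∈ T) ∧ (∀ v ∈ T, P v = v) ∧ (∀ v w : E, ⟪P v, w⟫ = ⟪v, P w⟫) ∧
      -- P restricted to M is injective ...
      Function.Injective (fun m : M => P (f m)) ∧
      -- ... and an immersion
      ∀ x : M, Function.Injective (fun v : F => P
        (mfderiv (modelWithCornersSelf ℝ F) (modelWithCornersSelf ℝ E) f x v)) :=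
  stmt_5_general f hf hemb himm
end

section
/- Let E be a Hilbert space, L a self-adjoint bounded isomorphism with positive eigenspace E⁺, and suppose |e^{TL}v| ≥ c(T)|v| for v ∈ E⁺ with c(T) → ∞. If (x_n) ⊂ B(0,s) is a sequence whose E⁺-components satisfy |x_n⁺ − x_m⁺| > ε for all n ≠ m, and x_n·T = e^{TL}x_n + K(x_n, T) with x_n·T ∈ B(0,s) for all n, then the set {K(x_n, T) : n ∈ ℕ} is not precompact, provided c(T) > 3s/ε. -/
/-!
Write `yₙ = A xₙ + Kₙ`. Since `A` commutes with the projection `P` onto `E⁺`,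
`P (Kₙ - Kₘ) = P (yₙ - yₘ) - A (P (xₙ - xₘ))`; the first term has norm `< 2s` and the
second norm `≥ c(T) ε > 3s`, so the `Kₙ` are pairwise more than `s` apart, which is
impossible for infinitely many points of a totally bounded set.
-/

open Set Metric RealInnerProductSpace

lemma LinearMap.IsSymmetric.norm_apply_le_of_isIdempotentElem {𝕜 E : Type*} [RCLike 𝕜]
    [NormedAddCommGroup E] [InnerProductSpace 𝕜 E] {P : E →ₗ[𝕜] E} (hsymm : P.IsSymmetric)
    (hidem : IsIdempotentElem P) (v : E) : ‖P v‖ ≤ ‖v‖ := by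
  have hsq : ‖P v‖ ^ 2 ≤ ‖v‖ * ‖P v‖ :=
    calc ‖P v‖ ^ 2 = RCLike.re (inner 𝕜 (P v) (P v)) := (inner_self_eq_norm_sq _).symm
      _ = RCLike.re (inner 𝕜 v (P v)) := by rw [hsymm, ← Module.End.mul_apply, hidem.eq]
      _ ≤ ‖v‖ * ‖P v‖ := (RCLike.re_le_norm _).trans (norm_inner_le_norm _ _)
  nlinarith [norm_nonneg (P v), norm_nonneg v]

lemma mul_norm_sub_le_norm_sub_of_expanding {E F : Type*} [NormedAddCommGroup E] [FunLike F E E]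
    [AddMonoidHomClass F E E] {P A : F} {c : ℝ} (hP : ∀ v, ‖P v‖ ≤ ‖v‖)
    (hAP : ∀ v, P (A v) = A (P v)) (hexp : ∀ v, c * ‖P v‖ ≤ ‖A (P v)‖) (u u' k k' : E) :
    c * ‖P (u - u')‖ - ‖(A u + k) - (A u' + k')‖ ≤ ‖k - k'‖ := by
  have hsplit : P (k - k') = P ((A u + k) - (A u' + k')) - A (P (u - u')) := by
    simp only [map_add, map_sub, hAP]
    abel
  calc c * ‖P (u - u')‖ - ‖(A u + k) - (A u' + k')‖
      ≤ ‖A (P (u - u'))‖ - ‖P ((A u + k) - (A u' + k'))‖ := sub_le_sub (hexp _) (hP _)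
    _ ≤ ‖P (k - k')‖ := by rw [hsplit, norm_sub_rev]; exact norm_sub_norm_le _ _
    _ ≤ ‖k - k'‖ := hP _

lemma not_totallyBounded_range_of_pairwise_lt_dist {X ι : Type*} [PseudoMetricSpace X]
    [Infinite ι] {f : ι → X} {δ : ℝ} (hδ : 0 < δ)
    (hf : Pairwise fun i j => δ < dist (f i) (f j)) : ¬ TotallyBounded (range f) := by
  intro hbdd
  obtain ⟨t, ht, hcover⟩ := totallyBounded_iff.1 hbdd (δ / 2) (half_pos hδ)
  have hcenter : ∀ i, ∃ y ∈ t, f i ∈ ball y (δ / 2) := fun i => by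
    simpa using hcover (mem_range_self i)
  choose center hcenter_mem hnear using hcenter
  have : Finite t := ht.to_subtype
  obtain ⟨i, j, hij, hsame⟩ :=
    Finite.exists_ne_map_eq_of_infinite fun i => (⟨center i, hcenter_mem i⟩ : t)
  have hcenter_eq : center i = center j := congrArg Subtype.val hsame
  have hdist : dist (f i) (f j) < δ :=
    calc dist (f i) (f j) ≤ dist (f i) (center i) + dist (f j) (center j) := by
          rw [hcenter_eq]; exact dist_triangle_right ..
      _ < δ / 2 + δ / 2 := add_lt_add (hnear i) (hnear j)
      _ = δ := add_halves δ
  exact (hf hij).not_gt hdist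

theorem stmt_16_general {E : Type*} [NormedAddCommGroup E] [InnerProductSpace ℝ E]
    -- P = orthogonal projection onto E⁺
    (P : E →L[ℝ] E)
    (hPidem : ∀ v, P (P v) = P v)
    (hPsa : ∀ v w : E, ⟪P v, w⟫ = ⟪v, P w⟫)
    -- A = e^{TL}, commuting with the spectral projection, expanding on E⁺
    (A : E →L[ℝ] E)
    (hAP : ∀ v, P (A v) = A (P v))
    (cT ε s : ℝ) (hε : 0 < ε) (hs : 0 < s)
    (hexp : ∀ v : E, cT * ‖P v‖ ≤ ‖A (P v)‖)
    (hc : 3 * s / ε < cT)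
    -- the sequence and the compact parts K(xₙ, T)
    (x K : ℕ → E)
    (hsep : ∀ n m : ℕ, n ≠ m → ε < ‖P (x n) - P (x m)‖)
    (hflow : ∀ n, A (x n) + K n ∈ ball (0:E) s) :
    ¬ TotallyBounded (Set.range K) := by
  have hP : ∀ v, ‖P v‖ ≤ ‖v‖ :=
    LinearMap.IsSymmetric.norm_apply_le_of_isIdempotentElem (P := (P : E →ₗ[ℝ] E)) hPsa
      (LinearMap.ext hPidem)
  have hcT : 0 < cT := lt_trans (by positivity) hc
  have hcε : 3 * s < cT * ε := (div_lt_iff₀ hε).1 hc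
  refine not_totallyBounded_range_of_pairwise_lt_dist hs fun n m hnm => ?_
  have hy : ‖(A (x n) + K n) - (A (x m) + K m)‖ < 2 * s :=
    (norm_sub_le _ _).trans_lt <| by
      linarith [mem_ball_zero_iff.1 (hflow n), mem_ball_zero_iff.1 (hflow m)]
  have hPx : cT * ε < cT * ‖P (x n - x m)‖ := by
    rw [map_sub]; exact mul_lt_mul_of_pos_left (hsep n m hnm) hcT
  have hK := mul_norm_sub_le_norm_sub_of_expanding hP hAP hexp (x n) (x m) (K n) (K m)
  show s < dist (K n) (K m)
  rw [dist_eq_norm]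
  linarith

/-- Let `P` be the orthogonal projection onto the positive spectral
subspace `E⁺` of the self-adjoint isomorphism `L`, `A = e^{TL}` with the expansion
estimate `‖A v‖ ≥ c(T) ‖v‖` on `E⁺`, and `c(T) > 3s/ε`.  If `(xₙ) ⊆ B(0,s)`
satisfies `‖xₙ⁺ − x_m⁺‖ > ε` for `n ≠ m` and `xₙ·T = A xₙ + Kₙ ∈ B(0,s)`, then
`{Kₙ}` is not precompact (indeed `‖Kₙ − K_m‖ > s` for `n ≠ m`). -/
theorem stmt_16 {E : Type*} [NormedAddCommGroup E] [InnerProductSpace ℝ E] [CompleteSpace E]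
    -- P = orthogonal projection onto E⁺
    (P : E →L[ℝ] E)
    (hPidem : ∀ v, P (P v) = P v)
    (hPsa : ∀ v w : E, ⟪P v, w⟫ = ⟪v, P w⟫)
    -- A = e^{TL}, commuting with the spectral projection, expanding on E⁺
    (A : E →L[ℝ] E)
    (hAP : ∀ v, P (A v) = A (P v))
    (cT ε s : ℝ) (hε : 0 < ε) (hs : 0 < s)
    (hexp : ∀ v : E, cT * ‖P v‖ ≤ ‖A (P v)‖)
    (hc : 3 * s / ε < cT)
    -- the sequence and the compact parts K(xₙ, T)
    (x K : ℕ → E)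
    (hx : ∀ n, x n ∈ ball (0:E) s)
    (hsep : ∀ n m : ℕ, n ≠ m → ε < ‖P (x n) - P (x m)‖)
    (hflow : ∀ n, A (x n) + K n ∈ ball (0:E) s) :
    ¬ TotallyBounded (Set.range K) :=
  stmt_16_general P hPidem hPsa A hAP cT ε s hε hs hexp hc x K hsep hflow
end

section
/- Let f : E → ℝ be C² of the form f(x) = ½⟨Lx,x⟩ + b(x) with L a self-adjoint isomorphism and D²b(x) compact for every x. Then for every x ∈ E, the Hessian D²f(x) = L + D²b(x) is a self-adjoint Fredholm operator of index 0; in particular, if x is a non-degenerate critical point, D²f(x) is an isomorphism and its negative eigenspace V satisfies: V ∩ E⁺ is finite-dimensional and V^⊥ ∩ E⁻ is finite-dimensional, so the relative index eind(x) = dim(V ∩ E⁺) − dim(V^⊥ ∩ E⁻) is a well-defined integer. -/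
/-
The second derivative of `b` is symmetric (Schwarz), so the Hessian `T = L + B` is symmetric.
A vector of `ker T` satisfies `v = -L⁻¹ B v`, so the compact operator `B` is bounded below on
`ker T`, which is therefore finite dimensional. Adding the orthogonal projection `P` onto `ker T`
gives an injective compact perturbation `T + P` of `L`, which is onto by the Fredholm alternative;
hence `range T = (ker T)ᗮ` and `E ⧸ range T ≃ ker T`.

At a non-degenerate critical point `T` is bounded below, and on a `T`-invariant subspace where `T`
is semidefinite, Cauchy–Schwarz for the form `⟪T ·, ·⟫` applied to `v` and `T v` gives
`‖v‖² ≤ c |⟪T v, v⟫|`. On `V ⊓ E⁺` and on `Vᗮ ⊓ E⁻` the sign of `⟪L v, v⟫` transfers this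
bound to `⟪B v, v⟫`, so `B` is bounded below there and both subspaces are finite dimensional.
-/

open Function RealInnerProductSpace

section Banach

variable {𝕜 X : Type*} [NontriviallyNormedField 𝕜] [NormedAddCommGroup X] [NormedSpace 𝕜 X]
  [CompleteSpace X]

theorem Submodule.finiteDimensional_of_norm_le_mul_norm_apply [CompleteSpace 𝕜] {F : Type*}
    [NormedAddCommGroup F] [NormedSpace 𝕜 F] {C : X →L[𝕜] F} (hC : IsCompactOperator C)
    (W : Submodule 𝕜 X) (c : ℝ) (hW : ∀ v ∈ W, ‖v‖ ≤ c * ‖C v‖) : FiniteDimensional 𝕜 W := by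
  set M := W.topologicalClosure
  have hM : ∀ v ∈ M, ‖v‖ ≤ c.toNNReal * ‖C v‖ := by
    have hclosed : IsClosed {v : X | ‖v‖ ≤ c.toNNReal * ‖C v‖} :=
      isClosed_le (by fun_prop) (by fun_prop)
    refine fun v hv ↦ closure_minimal (fun u hu ↦ ?_) hclosed
      (by rwa [← W.topologicalClosure_coe])
    exact (hW u hu).trans (by gcongr; exact Real.le_coe_toNNReal c)
  have : CompleteSpace M := W.isClosed_topologicalClosure.completeSpace_coe
  let g : M →L[𝕜] F := C ∘L M.subtypeL
  have hg : Topology.IsClosedEmbedding g :=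
    (g.antilipschitz_of_bound fun v ↦ hM v v.2).isClosedEmbedding g.uniformContinuous
  -- `g` is a closed embedding, so it pulls a compact set containing `g '' V` back to one
  -- containing `V`.
  have hid : IsCompactOperator (id : M → M) := by
    obtain ⟨V, hV, K, hK, hVK⟩ :=
      (isCompactOperator_iff_exists_mem_nhds_image_subset_compact _).1 (hC.comp_clm M.subtypeL)
    refine (isCompactOperator_iff_exists_mem_nhds_image_subset_compact _).2
      ⟨V, hV, g ⁻¹' K, hg.isCompact_preimage hK, ?_⟩
    rintro _ ⟨v, hv, rfl⟩
    exact hVK ⟨v, hv, rfl⟩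
  have := FiniteDimensional.of_isCompactOperator_id (𝕜 := 𝕜) hid
  exact Submodule.finiteDimensional_of_le W.le_topologicalClosure

theorem ContinuousLinearEquiv.finiteDimensional_ker_add [CompleteSpace 𝕜] (A : X ≃L[𝕜] X)
    {C : X →L[𝕜] X} (hC : IsCompactOperator C) :
    FiniteDimensional 𝕜 (LinearMap.ker ((A : X →L[𝕜] X) + C : X →ₗ[𝕜] X)) := by
  refine Submodule.finiteDimensional_of_norm_le_mul_norm_apply hC _ ‖(A.symm : X →L[𝕜] X)‖
    fun v hv ↦ ?_
  have hAv : A v = -C v := eq_neg_of_add_eq_zero_left hv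
  calc ‖v‖ = ‖(A.symm : X →L[𝕜] X) (-C v)‖ := by rw [← hAv, coe_coe, symm_apply_apply]
    _ ≤ ‖(A.symm : X →L[𝕜] X)‖ * ‖C v‖ := by
      rw [← norm_neg (C v)]; exact ContinuousLinearMap.le_opNorm _ _

theorem ContinuousLinearEquiv.surjective_add_of_injective (A : X ≃L[𝕜] X) {C : X →L[𝕜] X}
    (hC : IsCompactOperator C) (h : Injective ((A : X →L[𝕜] X) + C)) :
    Surjective ((A : X →L[𝕜] X) + C) := by
  set K := (A.symm : X →L[𝕜] X) ∘L C
  have hAK : (A : X →L[𝕜] X) + C = (A : X →L[𝕜] X) ∘L (1 + K) := by ext; simp [K]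
  have hinj : Injective (1 + K : X →L[𝕜] X) := by
    rw [hAK, ContinuousLinearMap.coe_comp] at h
    exact h.of_comp
  have hK : ¬ Module.End.HasEigenvalue (K : Module.End 𝕜 X) (-1) := fun hev ↦ by
    obtain ⟨v, hv, hv0⟩ := hev.exists_hasEigenvector
    refine hv0 (hinj ?_)
    rw [Module.End.mem_genEigenspace_one] at hv
    have hKv : K v = -v := by simpa using hv
    simp [hKv]
  have hKc : IsCompactOperator K := by
    rw [ContinuousLinearMap.coe_comp]; exact hC.clm_comp _
  have hres := (hKc.hasEigenvalue_or_mem_resolventSet (neg_ne_zero.2 one_ne_zero)).resolve_left hK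
  have hneg : algebraMap 𝕜 (X →L[𝕜] X) (-1) - K = -(1 + K) := by
    rw [(algebraMap 𝕜 (X →L[𝕜] X)).map_neg, map_one, neg_sub_left, add_comm]
  rw [spectrum.mem_resolventSet_iff, ContinuousLinearMap.isUnit_iff_bijective, hneg] at hres
  rw [hAK, ContinuousLinearMap.coe_comp]
  refine A.surjective.comp fun y ↦ ?_
  obtain ⟨u, hu⟩ := hres.surjective (-y)
  exact ⟨u, neg_injective (by simpa using hu)⟩

end Banach

section Hilbert

variable {𝕜 E : Type*} [RCLike 𝕜] [NormedAddCommGroup E] [InnerProductSpace 𝕜 E] [CompleteSpace E]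

theorem LinearMap.IsSymmetric.range_eq_orthogonal_ker_of_eq_add {T : E →L[𝕜] E}
    (hT : T.IsSymmetric) (A : E ≃L[𝕜] E) {C : E →L[𝕜] E} (hC : IsCompactOperator C)
    (hTAC : T = A + C) : LinearMap.range (T : E →ₗ[𝕜] E) = (LinearMap.ker (T : E →ₗ[𝕜] E))ᗮ := by
  have hrange : LinearMap.range (T : E →ₗ[𝕜] E) ≤ (LinearMap.ker (T : E →ₗ[𝕜] E))ᗮ := by
    have := Submodule.le_orthogonal_orthogonal (LinearMap.range (T : E →ₗ[𝕜] E))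
    rwa [hT.orthogonal_range] at this
  subst hTAC
  set K := LinearMap.ker ((A : E →L[𝕜] E) + C : E →ₗ[𝕜] E)
  have : FiniteDimensional 𝕜 K := A.finiteDimensional_ker_add hC
  have hP : IsCompactOperator K.starProjection :=
    (isCompactOperator_of_locallyCompactSpace_dom K.orthogonalProjectionOnto).clm_comp K.subtypeL
  -- `range T ⊥ ker T`, so if `T u + P u` is orthogonal to `ker T` then `P u = 0`.
  have hsplit {u y : E} (hu : (A + C) u + K.starProjection u = y) (hy : y ∈ Kᗮ) :
      K.starProjection u = 0 := by
    refine Submodule.disjoint_def.mp K.orthogonal_disjoint _ (K.starProjection_apply_mem u) ?_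
    rw [eq_sub_of_add_eq' hu]
    exact Kᗮ.sub_mem hy (hrange ⟨u, rfl⟩)
  have hinj : Injective ((A : E →L[𝕜] E) + (C + K.starProjection)) := by
    rw [injective_iff_map_eq_zero]
    intro u hu
    rw [← add_assoc, _root_.add_apply] at hu
    have hPu := hsplit hu Kᗮ.zero_mem
    rw [hPu, add_zero] at hu
    rwa [← Submodule.starProjection_eq_self_iff.mpr (LinearMap.mem_ker.mpr hu)]
  refine le_antisymm hrange fun y hy ↦ ?_
  obtain ⟨u, hu⟩ := A.surjective_add_of_injective (hC.add hP) hinj y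
  rw [← add_assoc, _root_.add_apply] at hu
  refine ⟨u, ?_⟩
  rwa [hsplit hu hy, add_zero] at hu

end Hilbert

theorem fderiv_fderiv_apply_comm {𝕜 E F : Type*} [RCLike 𝕜] [NormedAddCommGroup E]
    [NormedSpace 𝕜 E] [NormedAddCommGroup F] [NormedSpace 𝕜 F] {b : E → F} {x : E}
    (hb : ContDiffAt 𝕜 2 b x) (v w : E) :
    fderiv 𝕜 (fun y ↦ fderiv 𝕜 b y v) x w = fderiv 𝕜 (fun y ↦ fderiv 𝕜 b y w) x v := by
  have hdiff : DifferentiableAt 𝕜 (fderiv 𝕜 b) x :=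
    (hb.fderiv_right (m := 1) le_rfl).differentiableAt one_ne_zero
  have happly (u : E) : fderiv 𝕜 (fun y ↦ fderiv 𝕜 b y u) x = (fderiv 𝕜 (fderiv 𝕜 b) x).flip u := by
    simp [fderiv_clm_apply hdiff (differentiableAt_const u)]
  simp only [happly, ContinuousLinearMap.flip_apply]
  exact hb.isSymmSndFDerivAt (by simp) w v

section Real

variable {E : Type*} [NormedAddCommGroup E] [InnerProductSpace ℝ E]

theorem Submodule.finiteDimensional_of_norm_sq_le_mul_inner [CompleteSpace E]
    {C : E →L[ℝ] E} (hC : IsCompactOperator C) (W : Submodule ℝ E) (c : ℝ)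
    (hW : ∀ v ∈ W, ‖v‖ ^ 2 ≤ c * ⟪C v, v⟫) : FiniteDimensional ℝ W := by
  refine W.finiteDimensional_of_norm_le_mul_norm_apply hC |c| fun v hv ↦ ?_
  rcases eq_or_ne v 0 with rfl | hv0
  · simp
  refine le_of_mul_le_mul_right ?_ (norm_pos_iff.mpr hv0)
  calc ‖v‖ * ‖v‖ = ‖v‖ ^ 2 := (sq _).symm
    _ ≤ c * ⟪C v, v⟫ := hW v hv
    _ ≤ |c| * |⟪C v, v⟫| := (le_abs_self _).trans (abs_mul _ _).le
    _ ≤ |c| * (‖C v‖ * ‖v‖) := by gcongr; exact abs_real_inner_le_norm _ _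
    _ = |c| * ‖C v‖ * ‖v‖ := (mul_assoc _ _ _).symm

theorem LinearMap.IsSymmetric.norm_apply_sq_le_mul_inner {T : E →L[ℝ] E} (hT : T.IsSymmetric)
    {W : Submodule ℝ E} (hWT : W ∈ Module.End.invtSubmodule (T : E →ₗ[ℝ] E))
    (hW : ∀ v ∈ W, 0 ≤ ⟪T v, v⟫) {v : E} (hv : v ∈ W) : ‖T v‖ ^ 2 ≤ ‖T‖ * ⟪T v, v⟫ := by
  let β : LinearMap.BilinForm ℝ W := (innerₗ E).compl₁₂ ((T : E →ₗ[ℝ] E) ∘ₗ W.subtype) W.subtype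
  have hTv : T v ∈ W := hWT hv
  have hcs : ⟪T v, T v⟫ * ⟪T (T v), v⟫ ≤ ⟪T v, v⟫ * ⟪T (T v), T v⟫ :=
    β.apply_mul_apply_le_of_forall_zero_le (fun u ↦ hW u u.2) ⟨v, hv⟩ ⟨T v, hTv⟩
  rw [hT.apply_clm (T v) v, real_inner_self_eq_norm_sq] at hcs
  have hTTv : ⟪T (T v), T v⟫ ≤ ‖T‖ * ‖T v‖ ^ 2 := by
    calc ⟪T (T v), T v⟫ ≤ ‖T (T v)‖ * ‖T v‖ := real_inner_le_norm _ _
      _ ≤ ‖T‖ * ‖T v‖ * ‖T v‖ := by gcongr; exact T.le_opNorm _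
      _ = ‖T‖ * ‖T v‖ ^ 2 := by ring
  rcases eq_or_ne (T v) 0 with h0 | h0
  · simp [h0]
  have hpos : 0 < ‖T v‖ ^ 2 := by positivity
  refine le_of_mul_le_mul_right ?_ hpos
  calc ‖T v‖ ^ 2 * ‖T v‖ ^ 2 ≤ ⟪T v, v⟫ * ⟪T (T v), T v⟫ := hcs
    _ ≤ ⟪T v, v⟫ * (‖T‖ * ‖T v‖ ^ 2) := mul_le_mul_of_nonneg_left hTTv (hW v hv)
    _ = ‖T‖ * ⟪T v, v⟫ * ‖T v‖ ^ 2 := by ring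

theorem LinearMap.IsSymmetric.finiteDimensional_inf_of_inner_le_inner [CompleteSpace E]
    {T C : E →L[ℝ] E} (hT : T.IsSymmetric) (hTbij : Bijective T) (hC : IsCompactOperator C)
    {W U : Submodule ℝ E} (hWT : W ∈ Module.End.invtSubmodule (T : E →ₗ[ℝ] E))
    (hW : ∀ v ∈ W, 0 ≤ ⟪T v, v⟫) (hU : ∀ v ∈ U, ⟪T v, v⟫ ≤ ⟪C v, v⟫) :
    FiniteDimensional ℝ ↥(W ⊓ U) := by
  let e := ContinuousLinearEquiv.ofBijective T (LinearMap.ker_eq_bot.mpr hTbij.1)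
    (LinearMap.range_eq_top.mpr hTbij.2)
  set c := ‖(e.symm : E →L[ℝ] E)‖
  have hbound (v : E) : ‖v‖ ≤ c * ‖T v‖ := e.antilipschitz.le_mul_norm (map_zero e) v
  refine (W ⊓ U).finiteDimensional_of_norm_sq_le_mul_inner hC (c ^ 2 * ‖T‖) fun v hv ↦ ?_
  calc ‖v‖ ^ 2 ≤ (c * ‖T v‖) ^ 2 := by gcongr; exact hbound v
    _ = c ^ 2 * ‖T v‖ ^ 2 := by ring
    _ ≤ c ^ 2 * (‖T‖ * ⟪T v, v⟫) := by gcongr; exact hT.norm_apply_sq_le_mul_inner hWT hW hv.1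
    _ ≤ c ^ 2 * ‖T‖ * ⟪C v, v⟫ := by rw [← mul_assoc]; gcongr; exact hU v hv.2

theorem isSymmetric_of_inner_eq_fderiv_fderiv {b : E → ℝ} {x : E} (hb : ContDiffAt ℝ 2 b x)
    {B : E →L[ℝ] E} (hB : ∀ v w, ⟪B v, w⟫ = fderiv ℝ (fun y ↦ fderiv ℝ b y v) x w) :
    B.IsSymmetric := fun v w ↦ by
  rw [ContinuousLinearMap.coe_coe, hB, fderiv_fderiv_apply_comm hb, ← hB, real_inner_comm]

end Real

theorem stmt_19_general {E : Type*} [NormedAddCommGroup E] [InnerProductSpace ℝ E] [CompleteSpace E]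
    (f b : E → ℝ) (L : E ≃L[ℝ] E)
    (hLsa : ∀ v w : E, ⟪L v, w⟫ = ⟪v, L w⟫)
    (hf : ∀ x : E, f x = (1 / 2 : ℝ) * ⟪L x, x⟫ + b x)
    (hfC2 : ContDiff ℝ 2 f)
    -- D²b(x) as a compact self-adjoint operator
    (B : E → E →L[ℝ] E)
    (hB : ∀ x v w : E, ⟪B x v, w⟫ = fderiv ℝ (fun y => fderiv ℝ b y v) x w)
    (hBcompact : ∀ x : E, IsCompactOperator (B x))
    -- the Hessian of f
    (Hf : E → E →L[ℝ] E) (hHf : ∀ x : E, Hf x = (L : E →L[ℝ] E) + B x)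
    -- the spectral splitting E = E⁺ ⊕ E⁻ of L
    (Epos Eneg : Submodule ℝ E)
    (hLpos : ∀ v ∈ Epos, v ≠ 0 → 0 < ⟪L v, v⟫)
    (hLneg : ∀ v ∈ Eneg, v ≠ 0 → ⟪L v, v⟫ < 0)
    (x : E) :
    -- the Hessian is self-adjoint ...
    (∀ v w : E, ⟪Hf x v, w⟫ = ⟪v, Hf x w⟫) ∧
    -- ... and Fredholm of index 0
    (FiniteDimensional ℝ ↥(LinearMap.ker (Hf x : E →ₗ[ℝ] E)) ∧
      FiniteDimensional ℝ (E ⧸ LinearMap.range (Hf x : E →ₗ[ℝ] E)) ∧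
      Module.finrank ℝ ↥(LinearMap.ker (Hf x : E →ₗ[ℝ] E)) =
        Module.finrank ℝ (E ⧸ LinearMap.range (Hf x : E →ₗ[ℝ] E))) ∧
    -- at a non-degenerate critical point, for the negative eigenspace V of D²f(x):
    (Function.Bijective ⇑(Hf x) →
      ∀ V : Submodule ℝ E,
        (∀ v ∈ V, Hf x v ∈ V) →
        (∀ v ∈ V, v ≠ 0 → ⟪Hf x v, v⟫ < 0) →
        (∀ v ∈ Vᗮ, v ≠ 0 → 0 < ⟪Hf x v, v⟫) →
        FiniteDimensional ℝ ↥(V ⊓ Epos) ∧ FiniteDimensional ℝ ↥(Vᗮ ⊓ Eneg)) := by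
  have hb : ContDiff ℝ 2 b := by
    have hbf : b = fun y ↦ f y - 1 / 2 * ⟪L y, y⟫ := funext fun y ↦ by rw [hf]; ring
    exact hbf ▸ hfC2.sub (contDiff_const.mul ((L : E →L[ℝ] E).contDiff.inner ℝ contDiff_id))
  have hT : (Hf x).IsSymmetric := by
    rw [hHf]
    exact LinearMap.IsSymmetric.add (fun v w ↦ hLsa v w)
      (isSymmetric_of_inner_eq_fderiv_fderiv hb.contDiffAt (hB x))
  have hker : FiniteDimensional ℝ (LinearMap.ker (Hf x : E →ₗ[ℝ] E)) :=
    hHf x ▸ L.finiteDimensional_ker_add (hBcompact x)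
  have e : (E ⧸ LinearMap.range (Hf x : E →ₗ[ℝ] E)) ≃ₗ[ℝ] LinearMap.ker (Hf x : E →ₗ[ℝ] E) :=
    Submodule.quotientEquivOfIsCompl _ _
      (hT.range_eq_orthogonal_ker_of_eq_add L (hBcompact x) (hHf x) ▸
        (Submodule.isCompl_orthogonal _).symm)
  refine ⟨hT, ⟨hker, e.symm.finiteDimensional, e.finrank_eq.symm⟩,
    fun hbij V hVT hVneg hVpos ↦ ⟨?_, ?_⟩⟩
  · have hT' : (-Hf x).IsSymmetric := fun v w ↦ by simpa using congrArg Neg.neg (hT v w)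
    refine hT'.finiteDimensional_inf_of_inner_le_inner (C := -B x)
      (neg_involutive.bijective.comp hbij) (hBcompact x).neg (fun v hv ↦ V.neg_mem (hVT v hv))
      (fun v hv ↦ ?_) (fun v hv ↦ ?_)
    · exact (eq_or_ne v 0).elim (fun h ↦ by simp [h]) fun h ↦ by simpa using (hVneg v hv h).le
    · exact (eq_or_ne v 0).elim (fun h ↦ by simp [h]) fun h ↦ by
        simpa [hHf, inner_add_left] using (hLpos v hv h).le
  · refine hT.finiteDimensional_inf_of_inner_le_inner hbij (hBcompact x)
      (hT.orthogonalComplement_mem_invtSubmodule fun v hv ↦ hVT v hv)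
      (fun v hv ↦ ?_) (fun v hv ↦ ?_)
    · exact (eq_or_ne v 0).elim (fun h ↦ by simp [h]) fun h ↦ (hVpos v hv h).le
    · exact (eq_or_ne v 0).elim (fun h ↦ by simp [h]) fun h ↦ by
        simpa [hHf, inner_add_left] using (hLneg v hv h).le

/-- For `f(x) = ½⟨Lx,x⟩ + b(x)` of class `C²` with `L` a self-adjoint
isomorphism and `D²b(x)` compact for every `x`, the Hessian
`D²f(x) = L + D²b(x)` is self-adjoint and Fredholm of index `0` (finite-dimensional
kernel and cokernel of equal dimension); and if `x` is a non-degenerate critical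
point (the Hessian is an isomorphism), then the negative eigenspace `V` of
`D²f(x)` satisfies: `V ∩ E⁺` and `V^⊥ ∩ E⁻` are finite dimensional, so
`eind(x) = dim(V ∩ E⁺) − dim(V^⊥ ∩ E⁻)` is a well-defined integer. -/
theorem stmt_19 {E : Type*} [NormedAddCommGroup E] [InnerProductSpace ℝ E] [CompleteSpace E]
    (f b : E → ℝ) (L : E ≃L[ℝ] E)
    (hLsa : ∀ v w : E, ⟪L v, w⟫ = ⟪v, L w⟫)
    (hf : ∀ x : E, f x = (1 / 2 : ℝ) * ⟪L x, x⟫ + b x)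
    (hfC2 : ContDiff ℝ 2 f)
    -- D²b(x) as a compact self-adjoint operator
    (B : E → E →L[ℝ] E)
    (hB : ∀ x v w : E, ⟪B x v, w⟫ = fderiv ℝ (fun y => fderiv ℝ b y v) x w)
    (hBcompact : ∀ x : E, IsCompactOperator (B x))
    -- the Hessian of f
    (Hf : E → E →L[ℝ] E) (hHf : ∀ x : E, Hf x = (L : E →L[ℝ] E) + B x)
    -- the spectral splitting E = E⁺ ⊕ E⁻ of L
    (Epos Eneg : Submodule ℝ E) (hsplit : IsCompl Epos Eneg)
    (horth : ∀ v ∈ Epos, ∀ w ∈ Eneg, ⟪v, w⟫ = 0)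
    (hLpos : ∀ v ∈ Epos, v ≠ 0 → 0 < ⟪L v, v⟫)
    (hLneg : ∀ v ∈ Eneg, v ≠ 0 → ⟪L v, v⟫ < 0)
    (x : E) :
    -- the Hessian is self-adjoint ...
    (∀ v w : E, ⟪Hf x v, w⟫ = ⟪v, Hf x w⟫) ∧
    -- ... and Fredholm of index 0
    (FiniteDimensional ℝ ↥(LinearMap.ker (Hf x : E →ₗ[ℝ] E)) ∧
      FiniteDimensional ℝ (E ⧸ LinearMap.range (Hf x : E →ₗ[ℝ] E)) ∧
      Module.finrank ℝ ↥(LinearMap.ker (Hf x : E →ₗ[ℝ] E)) =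
        Module.finrank ℝ (E ⧸ LinearMap.range (Hf x : E →ₗ[ℝ] E))) ∧
    -- at a non-degenerate critical point, for the negative eigenspace V of D²f(x):
    (Function.Bijective ⇑(Hf x) →
      ∀ V : Submodule ℝ E,
        (∀ v ∈ V, Hf x v ∈ V) →
        (∀ v ∈ V, v ≠ 0 → ⟪Hf x v, v⟫ < 0) →
        (∀ v ∈ Vᗮ, v ≠ 0 → 0 < ⟪Hf x v, v⟫) →
        FiniteDimensional ℝ ↥(V ⊓ Epos) ∧ FiniteDimensional ℝ ↥(Vᗮ ⊓ Eneg)) :=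
  stmt_19_general f b L hLsa hf hfC2 B hB hBcompact Hf hHf Epos Eneg hLpos hLneg x
end
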